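/- Ordinal multiplication preserves Cantor normal form: for all trees a, b, if isCNF a and isCNF b, then isCNF (a · b). -/

import Mathlib

/-!
Writing `a = ω^a₁ + c`, the clause `a · (ω^b + d) = ω^(a₁ + b) + a · d` for `b ≠ 0` needs
`a₁ + b ≥ fst (a · d)`. For `d` in normal form and nonzero, `fst (a · d) = a₁ + fst d`, so this
follows from `b ≥ fst d` because left addition is strictly monotone. The clause
`a · (ω^0 + d) = a + a · d` only needs that sums of normal forms are normal forms.
-/

namespace CNFOrd

/-- Binary trees: `omega a b` represents the ordinal `ω^a + b`. -/
inductive T : Type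
  | zero : T
  | omega : T → T → T
  deriving DecidableEq

namespace T

/-- The strict order on trees. -/
inductive Lt : T → T → Prop
  | lt1 {a b : T} : Lt zero (omega a b)
  | lt2 {a b c d : T} : Lt a c → Lt (omega a b) (omega c d)
  | lt3 {a b c d : T} : a = c → Lt b d → Lt (omega a b) (omega c d)

/-- `a ≥ b` means `b < a` or `a = b`. -/
def Ge (a b : T) : Prop := Lt b a ∨ a = b

/-- First exponent of a tree. -/
def fst : T → T
  | zero => zero
  | omega a _ => a

/-- The predicate of being in Cantor normal form. -/
inductive isCNF : T → Prop
  | zero : isCNF zero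
  | omega {a b : T} : isCNF a → isCNF b → Ge a (fst b) → isCNF (omega a b)

/-- Decidability of the strict order. -/
def decLt : (a b : T) → Decidable (Lt a b)
  | _, zero => isFalse fun h => nomatch h
  | zero, omega _ _ => isTrue .lt1
  | omega a b, omega c d =>
    match decLt a c with
    | isTrue h => isTrue (.lt2 h)
    | isFalse h1 =>
      if he : a = c then
        match decLt b d with
        | isTrue h2 => isTrue (.lt3 he h2)
        | isFalse h2 => isFalse fun h => by
            cases h with
            | lt2 h' => exact h1 h'
            | lt3 _ h2' => exact h2 h2'
      else isFalse fun h => by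
            cases h with
            | lt2 h' => exact h1 h'
            | lt3 he' _ => exact he he'

instance : ∀ a b : T, Decidable (Lt a b) := decLt

/-- List insertion. -/
def insert (a : T) : T → T
  | zero => omega a zero
  | omega b c => if Lt a b then omega b (insert a c) else omega a (omega b c)

/-- The permutation congruence: smallest equivalence relation which is a
congruence for `omega` and satisfies the swap rule. -/
inductive Perm : T → T → Prop
  | refl (a : T) : Perm a a
  | symm {a b : T} : Perm a b → Perm b a
  | trans {a b c : T} : Perm a b → Perm b c → Perm a c
  | congr {a a' b b' : T} : Perm a a' → Perm b b' → Perm (omega a b) (omega a' b')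
  | swap (a b c : T) : Perm (omega a (omega b c)) (omega b (omega a c))

instance permSetoid : Setoid T := ⟨Perm, ⟨Perm.refl, Perm.symm, Perm.trans⟩⟩

/-- Hessenberg sum. -/
def oplus : T → T → T
  | zero, y => y
  | omega a b, y => omega a (oplus b y)

/-- Ordinal addition. -/
def add : T → T → T
  | zero, b => b
  | a, zero => a
  | omega a c, omega b d => if Lt a b then omega b d else omega a (add c (omega b d))

/-- Ordinal multiplication. -/
def mul : T → T → T
  | zero, _ => zero
  | _, zero => zero
  | a, omega zero d => add a (mul a d)
  | omega a c, omega b d => omega (add a b) (mul (omega a c) d)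

end T

end CNFOrd

namespace CNFOrd.T

theorem not_lt_zero {a : T} : ¬ Lt a zero := nofun

theorem lt_irrefl : ∀ a : T, ¬ Lt a a
  | zero => not_lt_zero
  | omega a b => fun
    | .lt2 h => lt_irrefl a h
    | .lt3 _ h => lt_irrefl b h

theorem lt_trans {a b c : T} (hab : Lt a b) (hbc : Lt b c) : Lt a c := by
  induction hab generalizing c with
  | lt1 => cases hbc <;> exact .lt1
  | lt2 h ih =>
    cases hbc with
    | lt2 h' => exact .lt2 (ih h')
    | lt3 he _ => exact he ▸ .lt2 h
  | lt3 he h ih =>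
    subst he
    cases hbc with
    | lt2 h' => exact .lt2 h'
    | lt3 he' h' => exact .lt3 he' (ih h')

theorem lt_trichotomy : ∀ a b : T, Lt a b ∨ a = b ∨ Lt b a
  | zero, zero => .inr (.inl rfl)
  | zero, omega _ _ => .inl .lt1
  | omega _ _, zero => .inr (.inr .lt1)
  | omega a₁ a₂, omega b₁ b₂ => by
    rcases lt_trichotomy a₁ b₁ with h | rfl | h
    · exact .inl (.lt2 h)
    · rcases lt_trichotomy a₂ b₂ with h | rfl | h
      · exact .inl (.lt3 rfl h)
      · exact .inr (.inl rfl)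
      · exact .inr (.inr (.lt3 rfl h))
    · exact .inr (.inr (.lt2 h))

theorem ge_of_not_lt {a b : T} (h : ¬ Lt a b) : Ge a b := by
  rcases lt_trichotomy a b with h' | h' | h'
  · exact absurd h' h
  · exact .inr h'
  · exact .inl h'

theorem ge_zero : ∀ a : T, Ge a zero
  | zero => .inr rfl
  | omega _ _ => .inl .lt1

theorem eq_zero_of_ge {a : T} (h : Ge zero a) : a = zero :=
  h.elim (absurd · not_lt_zero) Eq.symm

theorem zero_add (b : T) : add zero b = b := by cases b <;> rfl

theorem add_zero (a : T) : add a zero = a := by cases a <;> rfl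

theorem omega_add_omega (a c b d : T) :
    add (omega a c) (omega b d) =
      if Lt a b then omega b d else omega a (add c (omega b d)) := rfl

theorem zero_mul (b : T) : mul zero b = zero := by
  cases b with
  | zero => rfl
  | omega e f => cases e <;> rfl

theorem mul_zero (a : T) : mul a zero = zero := by cases a <;> rfl

theorem mul_omega_zero (a d : T) : mul a (omega zero d) = add a (mul a d) := by
  cases a with
  | zero => rw [zero_mul, zero_mul, zero_add]
  | omega _ _ => rfl

theorem omega_mul_omega_omega (a c e₁ e₂ d : T) :
    mul (omega a c) (omega (omega e₁ e₂) d) =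
      omega (add a (omega e₁ e₂)) (mul (omega a c) d) := rfl

theorem fst_omega_add_of_not_lt {a x : T} (c : T) (h : ¬ Lt a (fst x)) :
    fst (add (omega a c) x) = a := by
  cases x with
  | zero => rfl
  | omega x₁ y => rw [fst] at h; rw [omega_add_omega, if_neg h]; rfl

theorem fst_add_eq_or (a b : T) : fst (add a b) = fst a ∨ fst (add a b) = fst b := by
  cases a with
  | zero => exact .inr (by rw [zero_add])
  | omega a₁ c =>
    cases b with
    | zero => exact .inl (by rw [add_zero])
    | omega b₁ d =>
      rw [omega_add_omega]
      split
      · exact .inr rfl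
      · exact .inl rfl

theorem isCNF_add {a b : T} (ha : isCNF a) (hb : isCNF b) : isCNF (add a b) := by
  induction ha generalizing b with
  | zero => rwa [zero_add]
  | @omega a₁ c ha₁ _ hge _ ih =>
    cases b with
    | zero => rw [add_zero]; exact .omega ha₁ ‹_› hge
    | omega b₁ d =>
      rw [omega_add_omega]
      split
      · exact hb
      · refine .omega ha₁ (ih hb) ?_
        rcases fst_add_eq_or c (omega b₁ d) with h | h
        · rwa [h]
        · rw [h]; exact ge_of_not_lt ‹_›

theorem lt_add_of_ne_zero : ∀ (c : T) {x : T}, x ≠ zero → Lt c (add c x)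
  | _, zero, hx => absurd rfl hx
  | zero, omega _ _, _ => .lt1
  | omega c₁ e, omega u v, _ => by
    rw [omega_add_omega]
    split
    · exact .lt2 ‹_›
    · exact .lt3 rfl (lt_add_of_ne_zero e nofun)

theorem add_lt_add_left (a : T) {x y : T} (h : Lt x y) : Lt (add a x) (add a y) := by
  induction a generalizing x y with
  | zero => rwa [zero_add, zero_add]
  | omega a₁ c _ ih =>
    cases y with
    | zero => exact absurd h not_lt_zero
    | omega y₁ y₂ =>
      cases x with
      | zero => rw [add_zero]; exact lt_add_of_ne_zero _ nofun
      | omega x₁ x₂ =>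
        rw [omega_add_omega, omega_add_omega]
        by_cases hx : Lt a₁ x₁
        · have hy : Lt a₁ y₁ := by
            cases h with
            | lt2 h' => exact lt_trans hx h'
            | lt3 he _ => exact he ▸ hx
          rwa [if_pos hx, if_pos hy]
        · rw [if_neg hx]
          split
          · exact .lt2 ‹_›
          · exact .lt3 rfl (ih h)

theorem Ge.add_left (a : T) {x y : T} (h : Ge x y) : Ge (add a x) (add a y) :=
  h.imp (add_lt_add_left a) (congrArg (add a))

theorem fst_mul {a₁ c d : T} (hd : isCNF d) (hd₀ : d ≠ zero) :
    fst (mul (omega a₁ c) d) = add a₁ (fst d) := by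
  induction hd with
  | zero => exact absurd rfl hd₀
  | @omega e f _ hf hge _ ih =>
    cases e with
    | omega e₁ e₂ => rfl
    | zero =>
      have hf_fst : fst f = zero := eq_zero_of_ge hge
      have h_not_lt : ¬ Lt a₁ (fst (mul (omega a₁ c) f)) := by
        by_cases hf₀ : f = zero
        · rw [hf₀, mul_zero]; exact not_lt_zero
        · rw [ih hf₀, hf_fst, add_zero]; exact lt_irrefl a₁
      rw [mul_omega_zero, fst_omega_add_of_not_lt c h_not_lt, fst, add_zero]

end CNFOrd.T

open CNFOrd T in
/-- ordinal multiplication preserves Cantor normal form. -/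
theorem isCNF_mul : ∀ a b : T, isCNF a → isCNF b → isCNF (mul a b) := by
  intro a b ha hb
  induction hb with
  | zero => rw [T.mul_zero]; exact .zero
  | @omega e f he hf hge _ ih =>
    cases e with
    | zero => rw [mul_omega_zero]; exact isCNF_add ha ih
    | omega e₁ e₂ =>
      rcases ha with _ | ⟨ha₁, -, -⟩
      · rw [zero_mul]; exact .zero
      rw [omega_mul_omega_omega]
      refine .omega (isCNF_add ha₁ he) ih ?_
      by_cases hf₀ : f = zero
      · rw [hf₀, T.mul_zero]; exact ge_zero _
      · rw [fst_mul hf hf₀]; exact hge.add_left _
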